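/- Let π be a strongly continuous unitary representation of a locally compact second countable group G on a separable Hilbert space H with admissible vector u. Then the image V₂(H) of the voice transform equals the reproducing kernel space M² = {f ∈ L²(G) : f ⋆ K = f}, where K = V₂u; moreover π(f)u = f's inverse under V₂, i.e. V₂(π(f)u) = f for all f ∈ M² and π(V₂v)u = v for all v ∈ H, so V₂ is a unitary map from H onto M². -/

import Mathlib

/-!
Admissibility of `u` says that the voice transform `V₂ v = ⟪π · u, v⟫` is an isometry
`H → L²(G)`, so `V₂* V₂ = 1`, and `V₂* f` is exactly the weak integral `π(f)u`. Since
`K (y⁻¹ x) = ⟪π x u, π y u⟫`, testing the weak integral against `π x u` gives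
`V₂ (π(f)u) = f ⋆ K`. On `M²` this is `f`, and for `f = V₂ v` it is `V₂ (V₂* V₂ v) = V₂ v`.
-/

open MeasureTheory
open scoped ComplexInnerProductSpace

/-- The convolution `f ⋆ g (x) = ∫ f y * g (y⁻¹ x) dy` on a locally compact group. -/
noncomputable def groupConv {G : Type*} [Group G] [MeasurableSpace G]
    (μ : MeasureTheory.Measure G) (f g : G → ℂ) : G → ℂ :=
  fun x => ∫ y, f y * g (y⁻¹ * x) ∂μ

section ParsevalFrame

variable {α : Type*} [MeasurableSpace α] (μ : Measure α)
  {H : Type*} [NormedAddCommGroup H] [InnerProductSpace ℂ H] (φ : α → H)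

/-- For `φ x = π x u` this says that `u` is an admissible vector. -/
def IsParsevalFrame : Prop :=
  ∀ v : H, MemLp (fun x => ⟪φ x, v⟫) 2 μ ∧ eLpNorm (fun x => ⟪φ x, v⟫) 2 μ = ENNReal.ofReal ‖v‖

variable {μ φ}

noncomputable def IsParsevalFrame.analysisOperator (hφ : IsParsevalFrame μ φ) :
    H →ₗᵢ[ℂ] Lp ℂ 2 μ where
  toFun v := (hφ v).1.toLp _
  map_add' v w := by
    rw [← MemLp.toLp_add]
    exact MemLp.toLp_congr _ _ (ae_of_all _ fun x => inner_add_right _ _ _)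
  map_smul' c v := by
    rw [RingHom.id_apply, ← MemLp.toLp_const_smul]
    exact MemLp.toLp_congr _ _ (ae_of_all _ fun x => inner_smul_right _ _ _)
  norm_map' v := by
    show ‖(hφ v).1.toLp _‖ = ‖v‖
    rw [Lp.norm_toLp, (hφ v).2, ENNReal.toReal_ofReal (norm_nonneg v)]

theorem IsParsevalFrame.coeFn_analysisOperator (hφ : IsParsevalFrame μ φ) (v : H) :
    hφ.analysisOperator v =ᵐ[μ] fun x => ⟪φ x, v⟫ :=
  MemLp.coeFn_toLp (hφ v).1

theorem IsParsevalFrame.inner_analysisOperator_left (hφ : IsParsevalFrame μ φ) (w : H)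
    (F : Lp ℂ 2 μ) : ⟪hφ.analysisOperator w, F⟫ = ∫ x, F x * ⟪w, φ x⟫ ∂μ := by
  rw [L2.inner_def]
  refine integral_congr_ae ?_
  filter_upwards [hφ.coeFn_analysisOperator w] with x hx
  rw [hx, RCLike.inner_apply, inner_conj_symm, mul_comm]

theorem IsParsevalFrame.inner_eq_integral (hφ : IsParsevalFrame μ φ) (v w : H) :
    ⟪w, v⟫ = ∫ x, ⟪φ x, v⟫ * ⟪w, φ x⟫ ∂μ := by
  rw [← hφ.analysisOperator.inner_map_map, hφ.inner_analysisOperator_left]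
  refine integral_congr_ae ?_
  filter_upwards [hφ.coeFn_analysisOperator v] with x hx
  rw [hx]

/-- The adjoint of the analysis operator is the weak integral `f ↦ ∫ f x • φ x dμ`
(`π(f)u` when `φ x = π x u`). -/
theorem IsParsevalFrame.inner_adjoint_toLp [CompleteSpace H] (hφ : IsParsevalFrame μ φ)
    {f : α → ℂ} (hf : MemLp f 2 μ) (w : H) :
    ⟪w, hφ.analysisOperator.toContinuousLinearMap.adjoint (hf.toLp f)⟫ =
      ∫ x, f x * ⟪w, φ x⟫ ∂μ := by
  rw [ContinuousLinearMap.adjoint_inner_right, LinearIsometry.coe_toContinuousLinearMap,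
    hφ.inner_analysisOperator_left]
  refine integral_congr_ae ?_
  filter_upwards [hf.coeFn_toLp] with x hx
  rw [hx]

end ParsevalFrame

section Representation

variable {G : Type*} [Group G] {H : Type*} [NormedAddCommGroup H] [InnerProductSpace ℂ H]
  (π : G →* (H ≃ₗᵢ[ℂ] H))

theorem inner_map_inv_mul_apply (x y : G) (u v : H) :
    ⟪π (y⁻¹ * x) u, v⟫ = ⟪π x u, π y v⟫ := by
  rw [← (π y).inner_map_map, ← Function.comp_apply (f := π y), ← LinearIsometryEquiv.coe_mul,
    ← map_mul, mul_inv_cancel_left]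

theorem voice_eq_groupConv_of_inner_eq_integral [MeasurableSpace G] {μ : Measure G} {u v : H}
    {f : G → ℂ} (hv : ∀ w : H, ⟪w, v⟫ = ∫ x, f x * ⟪w, π x u⟫ ∂μ) :
    (fun x => ⟪π x u, v⟫) = groupConv μ f (fun x => ⟪π x u, u⟫) := by
  funext x
  simp only [groupConv, hv (π x u), inner_map_inv_mul_apply]

end Representation

theorem voice_transform_range_eq_reproducing_kernel_space_general
    {G : Type*} [Group G]
    [MeasurableSpace G]
    (μ : Measure G)
    {H : Type*} [NormedAddCommGroup H] [InnerProductSpace ℂ H] [CompleteSpace H]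
    (π : G →* (H ≃ₗᵢ[ℂ] H))
    (u : H)
    (hadm : ∀ v : H, MemLp (fun x => ⟪π x u, v⟫) 2 μ ∧
      eLpNorm (fun x => ⟪π x u, v⟫) 2 μ = ENNReal.ofReal ‖v‖) :
    -- `V₂(H) ⊆ M²` : every voice transform is reproduced by convolution with `K`
    (∀ v : H, groupConv μ (fun x => ⟪π x u, v⟫) (fun x => ⟪π x u, u⟫)
        =ᵐ[μ] fun x => ⟪π x u, v⟫) ∧
    -- `M² ⊆ V₂(H)` : every `f ∈ M²` is the voice transform of `π(f)u`, and `V₂ π(f)u = f`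
    (∀ f : G → ℂ, MemLp f 2 μ →
      groupConv μ f (fun x => ⟪π x u, u⟫) =ᵐ[μ] f →
      ∃ v : H, (∀ w : H, ⟪w, v⟫ = ∫ x, f x * ⟪w, π x u⟫ ∂μ) ∧
        (fun x => ⟪π x u, v⟫) =ᵐ[μ] f) ∧
    -- `π(V₂v)u = v` for every `v ∈ H`
    (∀ v w : H, ⟪w, v⟫ = ∫ x, ⟪π x u, v⟫ * ⟪w, π x u⟫ ∂μ) := by
  have hframe : IsParsevalFrame μ fun x => π x u := hadm
  refine ⟨fun v => ?_, fun f hf hconv => ?_, hframe.inner_eq_integral⟩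
  · exact .of_eq (voice_eq_groupConv_of_inner_eq_integral π (hframe.inner_eq_integral v)).symm
  · have hv := hframe.inner_adjoint_toLp hf
    refine ⟨_, hv, ?_⟩
    rwa [voice_eq_groupConv_of_inner_eq_integral π hv]

/-- Let `π` be a strongly continuous unitary representation of a locally compact second
countable group `G` on a separable Hilbert space `H` with admissible vector `u`, voice
transform `V₂v = ⟨v, π(·)u⟩` and kernel `K = V₂u`. Then the image of `V₂` is the reproducing
kernel space `M² = {f ∈ L²(G) : f ⋆ K = f}`; moreover `V₂(π(f)u) = f` for `f ∈ M²` and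
`π(V₂v)u = v` for `v ∈ H`, where `π(f)u` is defined weakly by
`⟨π(f)u, w⟩ = ∫ f(x) ⟨π(x)u, w⟩ dx`. Hence `V₂` is a unitary map from `H` onto `M²`. -/
theorem voice_transform_range_eq_reproducing_kernel_space
    {G : Type*} [Group G] [TopologicalSpace G] [IsTopologicalGroup G]
    [LocallyCompactSpace G] [SecondCountableTopology G]
    [MeasurableSpace G] [BorelSpace G]
    (μ : Measure G) [μ.IsHaarMeasure]
    {H : Type*} [NormedAddCommGroup H] [InnerProductSpace ℂ H] [CompleteSpace H]
    [SecondCountableTopology H]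
    (π : G →* (H ≃ₗᵢ[ℂ] H))
    (hπ_cont : ∀ v : H, Continuous fun x => π x v)
    (u : H)
    (hadm : ∀ v : H, MemLp (fun x => ⟪π x u, v⟫) 2 μ ∧
      eLpNorm (fun x => ⟪π x u, v⟫) 2 μ = ENNReal.ofReal ‖v‖) :
    -- `V₂(H) ⊆ M²` : every voice transform is reproduced by convolution with `K`
    (∀ v : H, groupConv μ (fun x => ⟪π x u, v⟫) (fun x => ⟪π x u, u⟫)
        =ᵐ[μ] fun x => ⟪π x u, v⟫) ∧
    -- `M² ⊆ V₂(H)` : every `f ∈ M²` is the voice transform of `π(f)u`, and `V₂ π(f)u = f`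
    (∀ f : G → ℂ, MemLp f 2 μ →
      groupConv μ f (fun x => ⟪π x u, u⟫) =ᵐ[μ] f →
      ∃ v : H, (∀ w : H, ⟪w, v⟫ = ∫ x, f x * ⟪w, π x u⟫ ∂μ) ∧
        (fun x => ⟪π x u, v⟫) =ᵐ[μ] f) ∧
    -- `π(V₂v)u = v` for every `v ∈ H`
    (∀ v w : H, ⟪w, v⟫ = ∫ x, ⟪π x u, v⟫ * ⟪w, π x u⟫ ∂μ) :=
  voice_transform_range_eq_reproducing_kernel_space_general μ π u hadm
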